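/- Let (Q,I) be a special biserial bound quiver with associated set R of binomial relations. Then dim_k S ≤ χ(Q), where S is the semisimple ideal spanned by the classes of paths in binomial relations (so dim_k S = |R|) and χ(Q) = |Q_1| - |Q_0| + N is the Euler characteristic of Q (N the number of connected components). -/

import Mathlib

open Classical

noncomputable section

/-- A finite quiver: finite sets of vertices and arrows with source and target maps. -/
structure FQuiver where
  V : Type
  A : Type
  [fintV : Fintype V]
  [decV : DecidableEq V]
  [fintA : Fintype A]
  [decA : DecidableEq A]
  src : A → V
  tgt : A → V

attribute [instance] FQuiver.fintV FQuiver.decV FQuiver.fintA FQuiver.decA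

namespace FQuiver

variable {Q : FQuiver}

/-- Oriented paths in a quiver. -/
inductive Path (Q : FQuiver) : Q.V → Q.V → Type
  | nil (v : Q.V) : Path Q v v
  | cons (a : Q.A) {w : Q.V} (p : Path Q (Q.tgt a) w) : Path Q (Q.src a) w

/-- Composition (concatenation) of paths. -/
def Path.comp : ∀ {u v w : Q.V}, Path Q u v → Path Q v w → Path Q u w
  | _, _, _, .nil _, q => q
  | _, _, _, .cons a p, q => .cons a (Path.comp p q)

/-- Length of a path. -/
def Path.length : ∀ {u v : Q.V}, Path Q u v → ℕ
  | _, _, .nil _ => 0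
  | _, _, .cons _ p => Path.length p + 1

/-- The list of arrows of a path, in order. -/
def Path.arrows : ∀ {u v : Q.V}, Path Q u v → List Q.A
  | _, _, .nil _ => []
  | _, _, .cons a p => a :: Path.arrows p

/-- An arrow regarded as a path of length one. -/
def arrow (Q : FQuiver) (a : Q.A) : Path Q (Q.src a) (Q.tgt a) := .cons a (.nil _)

/-- Power of an oriented cycle. -/
def Path.pow {x : Q.V} (c : Path Q x x) : ℕ → Path Q x x
  | 0 => .nil x
  | n + 1 => c.comp (Path.pow c n)

/-- Transport a path along equalities of its endpoints. -/
def Path.cast {u u' v v' : Q.V} (hu : u = u') (hv : v = v') (p : Path Q u v) :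
    Path Q u' v' := by subst hu; subst hv; exact p

/-- The length-two path `ab` formed by two composable arrows. -/
def comp2 (a b : Q.A) (h : Q.src b = Q.tgt a) : Path Q (Q.src a) (Q.tgt b) :=
  (arrow Q a).comp ((arrow Q b).cast h rfl)

/-- The set of all paths of a quiver, bundled with their endpoints. -/
def PathsSigma (Q : FQuiver) : Type := Σ (u : Q.V) (v : Q.V), Path Q u v

/-- The underlying vector space of the path algebra `kQ`: the free `k`-module on paths. -/
abbrev PAlg (k : Type) [Field k] (Q : FQuiver) : Type := PathsSigma Q →₀ k

/-- The basis vector of `kQ` corresponding to a path. -/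
def pvec (k : Type) [Field k] {u v : Q.V} (p : Path Q u v) : PAlg k Q :=
  Finsupp.single ⟨u, v, p⟩ 1

/-- Left multiplication of an element of `kQ` by a path. -/
def lmul (k : Type) [Field k] {u v : Q.V} (p : Path Q u v) (x : PAlg k Q) : PAlg k Q :=
  x.sum fun s c => if h : s.1 = v then c • pvec k (p.comp ((Sigma.snd (Sigma.snd s)).cast h rfl)) else 0

/-- Right multiplication of an element of `kQ` by a path. -/
def rmul (k : Type) [Field k] {u v : Q.V} (x : PAlg k Q) (p : Path Q u v) : PAlg k Q :=
  x.sum fun s c => if h : s.2.1 = u then c • pvec k (Path.comp ((Sigma.snd (Sigma.snd s)).cast rfl h) p) else 0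

/-- The two-sided ideal of `kQ` generated by a set of elements. -/
def idealGen (k : Type) [Field k] (Q : FQuiver) (s : Set (PAlg k Q)) : Submodule k (PAlg k Q) :=
  sInf {M : Submodule k (PAlg k Q) |
    s ⊆ (M : Set (PAlg k Q)) ∧
    ∀ (u v : Q.V) (p : Path Q u v) (x : PAlg k Q), x ∈ M → lmul k p x ∈ M ∧ rmul k x p ∈ M}

/-- An admissible (two-sided) ideal `(kQ⁺)ᵐ ⊆ I ⊆ (kQ⁺)²` of the path algebra. -/
structure AdmissibleIdeal (k : Type) [Field k] (Q : FQuiver) where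
  I : Submodule k (PAlg k Q)
  lmul_mem : ∀ {u v : Q.V} (p : Path Q u v) {x : PAlg k Q}, x ∈ I → lmul k p x ∈ I
  rmul_mem : ∀ {u v : Q.V} (p : Path Q u v) {x : PAlg k Q}, x ∈ I → rmul k x p ∈ I
  bound : ℕ
  two_le_bound : 2 ≤ bound
  pow_le : ∀ {u v : Q.V} (p : Path Q u v), bound ≤ p.length → pvec k p ∈ I
  le_sq : ∀ x ∈ I, ∀ s ∈ x.support, 2 ≤ (Sigma.snd (Sigma.snd s)).length

/-- A special biserial bound quiver `(Q, I)`. -/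
structure SpecialBiserial (k : Type) [Field k] (Q : FQuiver) extends AdmissibleIdeal k Q where
  src_card : ∀ v : Q.V, Fintype.card {a : Q.A // Q.src a = v} ≤ 2
  tgt_card : ∀ v : Q.V, Fintype.card {a : Q.A // Q.tgt a = v} ≤ 2
  unique_succ : ∀ (a b c : Q.A) (hb : Q.src b = Q.tgt a) (hc : Q.src c = Q.tgt a),
      pvec k (comp2 a b hb) ∉ I → pvec k (comp2 a c hc) ∉ I → b = c
  unique_pred : ∀ (a b c : Q.A) (hb : Q.tgt b = Q.src a) (hc : Q.tgt c = Q.src a),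
      pvec k (comp2 b a hb.symm) ∉ I → pvec k (comp2 c a hc.symm) ∉ I → b = c

/-- A binomial relation `u - λv ∈ I` between distinct parallel paths not in `I`. -/
structure BinRel {k : Type} [Field k] {Q : FQuiver} (J : AdmissibleIdeal k Q) where
  s : Q.V
  t : Q.V
  u : Path Q s t
  v : Path Q s t
  coef : k
  coef_ne : coef ≠ 0
  u_ne_v : u ≠ v
  u_not_mem : pvec k u ∉ J.I
  v_not_mem : pvec k v ∉ J.I
  rel_mem : pvec k u - coef • pvec k v ∈ J.I

/-- `I` is generated by a set of paths (monomial relations) together with the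
binomial relations in `R`. -/
def Generates {k : Type} [Field k] {Q : FQuiver} (J : AdmissibleIdeal k Q)
    (R : Set (BinRel J)) : Prop :=
  ∃ P : Set (PathsSigma Q),
    (∀ s ∈ P, pvec k (Sigma.snd (Sigma.snd s)) ∈ J.I) ∧
    J.I = idealGen k Q
      (((fun s : PathsSigma Q => pvec k (Sigma.snd (Sigma.snd s))) '' P) ∪
       ((fun r : BinRel J => pvec k r.u - r.coef • pvec k r.v) '' R))

/-- The ideal `S ⊆ A = kQ/I`: the span of the residue classes of the paths occurring
in the binomial relations of `R`. -/
def Smod {k : Type} [Field k] {Q : FQuiver} (J : AdmissibleIdeal k Q) (R : Set (BinRel J)) :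
    Submodule k (PAlg k Q ⧸ J.I) :=
  Submodule.span k
    ((fun r : BinRel J => (Submodule.Quotient.mk (pvec k r.u) : PAlg k Q ⧸ J.I)) '' R)

/-- Number of connected components of the underlying graph of `Q`. -/
def numComponents (Q : FQuiver) : ℕ :=
  Nat.card (Quot (fun u v : Q.V => ∃ a : Q.A, Q.src a = u ∧ Q.tgt a = v))

/-- A quiver is acyclic (triangular) if it has no nontrivial oriented cycle. -/
def Acyclic (Q : FQuiver) : Prop := ∀ (x : Q.V) (p : Path Q x x), p.length = 0

/-- A simple cycle: a nontrivial oriented cycle visiting no vertex twice. -/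
def IsSimpleCycle {x : Q.V} (p : Path Q x x) : Prop :=
  p.length ≠ 0 ∧ (p.arrows.map Q.src).Nodup

/-- `dim_k S = χ(Q)`, written additively: `dim S + |Q₀| = |Q₁| + N`. -/
def EulerEq {k : Type} [Field k] {Q : FQuiver} (J : AdmissibleIdeal k Q)
    (R : Set (BinRel J)) : Prop :=
  Module.finrank k ↥(Smod J R) + Fintype.card Q.V = Fintype.card Q.A + numComponents Q

/-- The word in the free group on the arrows determined by a path. -/
def pathWord (Q : FQuiver) {u v : Q.V} (p : Path Q u v) : FreeGroup Q.A :=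
  (p.arrows.map FreeGroup.of).prod

/-- `T` is a spanning tree of (the underlying graph of) `Q`. -/
def IsSpanningTree (Q : FQuiver) (T : Set Q.A) : Prop :=
  (∀ u v : Q.V,
      Quot.mk (fun a b : Q.V => ∃ e ∈ T, Q.src e = a ∧ Q.tgt e = b) u =
      Quot.mk (fun a b : Q.V => ∃ e ∈ T, Q.src e = a ∧ Q.tgt e = b) v) ∧
  Nat.card T + 1 = Fintype.card Q.V

/-- The fundamental group of the bound quiver `(Q, I)` (for connected `Q`,
with respect to a spanning tree `T`): the free group on the arrows modulo the
tree arrows and the homotopy relations coming from the binomial relations. -/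
abbrev pi1 {k : Type} [Field k] {Q : FQuiver} (J : AdmissibleIdeal k Q)
    (T : Set Q.A) (R : Set (BinRel J)) : Type :=
  FreeGroup Q.A ⧸ Subgroup.normalClosure
    ((FreeGroup.of '' T) ∪
     ((fun r : BinRel J => pathWord Q r.u * (pathWord Q r.v)⁻¹) '' R))

end FQuiver

/-!
Let `u - λ v` be a binomial relation of a special biserial bound quiver. Consecutive arrows of a
path outside `I` follow each other in the unique way allowed by the special biserial conditions,
so two paths outside `I` starting (ending) with the same arrow are prefix (suffix) comparable.
A relation path `u` cannot be extended to the right outside `I`: otherwise `u` and `v` would end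
with the same arrow, one would be a nontrivial cycle times the other, and `w u ≡ c u` forces
`u ∈ I` because long paths lie in `I`. Hence a relation path is determined by its first arrow.

Choosing relations whose classes `[u]` form a basis of `S`, the `2 dim S` paths `u, v` thus have
pairwise distinct first arrows. Count on the subgraph they span: an arrow without a predecessor in
these paths is the first arrow of exactly one of them and can be deleted together with its
relation without changing the number of components, since the partner path reconnects its ends;
if every arrow has a predecessor, every vertex met by the paths has an outgoing arrow and the
common source of each pair has two.
-/

namespace List

variable {α : Type*} {R : α → α → Prop}

theorem IsChain.isPrefix_or_isPrefix (hR : Relator.RightUnique R) {l₁ l₂ : List α}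
    (h₁ : l₁.IsChain R) (h₂ : l₂.IsChain R) (h : l₁.head? = l₂.head?) :
    l₁ <+: l₂ ∨ l₂ <+: l₁ := by
  induction l₁ generalizing l₂ with
  | nil => exact .inl nil_prefix
  | cons a t ih =>
    cases l₂ with
    | nil => simp at h
    | cons b t' =>
      obtain rfl : a = b := by simpa using h
      rcases t with _ | ⟨c, t⟩
      · exact .inl (by simp)
      rcases t' with _ | ⟨d, t'⟩
      · exact .inr (by simp)
      obtain rfl : c = d := hR (isChain_cons_cons.1 h₁).1 (isChain_cons_cons.1 h₂).1
      rcases ih h₁.tail h₂.tail rfl with h | h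
      exacts [.inl ((prefix_cons_inj a).2 h), .inr ((prefix_cons_inj a).2 h)]

theorem IsChain.isSuffix_or_isSuffix (hR : Relator.LeftUnique R) {l₁ l₂ : List α}
    (h₁ : l₁.IsChain R) (h₂ : l₂.IsChain R) (h : l₁.getLast? = l₂.getLast?) :
    l₁ <:+ l₂ ∨ l₂ <:+ l₁ := by
  have := IsChain.isPrefix_or_isPrefix (R := flip R) (fun _ _ _ hab hac => hR hab hac)
    (isChain_reverse.2 h₁) (isChain_reverse.2 h₂) (by simpa using h)
  simpa only [reverse_prefix] using this

theorem IsChain.exists_rel_of_mem_tail {b e : α} {t : List α} (h : (b :: t).IsChain R)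
    (he : e ∈ t) : ∃ a ∈ b :: t, R a e := by
  induction t generalizing b with
  | nil => simp at he
  | cons c t ih =>
    rcases mem_cons.mp he with rfl | he
    · exact ⟨b, mem_cons_self, (isChain_cons_cons.1 h).1⟩
    · obtain ⟨a, ha, hae⟩ := ih h.tail he
      exact ⟨a, mem_cons_of_mem _ ha, hae⟩

end List

/-- The predecessor map is injective, hence a permutation of `U`. -/
theorem Relator.RightUnique.exists_rel_of_forall_exists_rel {α : Type*} {F : α → α → Prop}
    (hF : Relator.RightUnique F) {U : Finset α} (h : ∀ e ∈ U, ∃ a ∈ U, F a e) :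
    ∀ b ∈ U, ∃ e ∈ U, F b e := by
  choose pred hpred hF' using h
  intro b hb
  obtain ⟨e, he, rfl⟩ := Finset.surj_on_of_inj_on_of_card_le pred hpred
    (fun e₁ e₂ h₁ h₂ heq => hF (heq ▸ hF' e₁ h₁) (hF' e₂ h₂)) le_rfl b hb
  exact ⟨e, he, hF' e he⟩

section Quot

variable {α : Type*} [Finite α] {r r' : α → α → Prop}

theorem Nat.card_quot_le_of_forall_mk_eq (h : ∀ a b, r a b → Quot.mk r' a = Quot.mk r' b) :
    Nat.card (Quot r') ≤ Nat.card (Quot r) :=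
  Nat.card_le_card_of_surjective (Quot.lift (Quot.mk r') h) fun q =>
    let ⟨a, ha⟩ := Quot.exists_rep q; ⟨Quot.mk r a, ha⟩

/-- Collapsing the class of `y` onto that of `x` is compatible with `r`. -/
theorem Nat.card_quot_le_add_one_of_forall_or {x y : α}
    (h : ∀ a b, r a b → r' a b ∨ (a = x ∧ b = y)) :
    Nat.card (Quot r') ≤ Nat.card (Quot r) + 1 := by
  let ψ : Quot r' → Quot r' := fun q => if q = Quot.mk r' y then Quot.mk r' x else q
  have hψ : ∀ a b, r a b → ψ (Quot.mk r' a) = ψ (Quot.mk r' b) := by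
    intro a b hab
    rcases h a b hab with h | ⟨rfl, rfl⟩
    · rw [Quot.sound h]
    · simp [ψ]
  let g : Quot r ⊕ Unit → Quot r' :=
    Sum.elim (Quot.lift (ψ ∘ Quot.mk r') hψ) fun _ => Quot.mk r' y
  have hg : Function.Surjective g := by
    intro q
    by_cases hq : q = Quot.mk r' y
    · exact ⟨.inr (), hq.symm⟩
    · obtain ⟨a, rfl⟩ := Quot.exists_rep q
      exact ⟨.inl (Quot.mk r a), by simp [g, ψ, hq]⟩
  simpa [Nat.card_sum] using Nat.card_le_card_of_surjective g hg

end Quot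

namespace FQuiver

section

variable {Q : FQuiver}

namespace Path

def toSigma {u v : Q.V} (p : Path Q u v) : PathsSigma Q := ⟨u, v, p⟩

theorem comp_assoc {u v w z : Q.V} (p : Path Q u v) (q : Path Q v w) (r : Path Q w z) :
    (p.comp q).comp r = p.comp (q.comp r) := by
  induction p with
  | nil => rfl
  | cons a p ih => simp [Path.comp, ih]

@[simp] theorem length_comp {u v w : Q.V} (p : Path Q u v) (q : Path Q v w) :
    (p.comp q).length = p.length + q.length := by
  induction p with
  | nil => simp [Path.comp, Path.length]
  | cons a p ih => simp [Path.comp, Path.length, ih]; omega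

@[simp] theorem arrows_comp {u v w : Q.V} (p : Path Q u v) (q : Path Q v w) :
    (p.comp q).arrows = p.arrows ++ q.arrows := by
  induction p with
  | nil => rfl
  | cons a p ih => simp [Path.comp, Path.arrows, ih]

@[simp] theorem length_arrows {u v : Q.V} (p : Path Q u v) : p.arrows.length = p.length := by
  induction p with
  | nil => rfl
  | cons a p ih => simp [Path.arrows, Path.length, ih]

@[simp] theorem arrows_cast {u u' v v' : Q.V} (hu : u = u') (hv : v = v') (p : Path Q u v) :
    (p.cast hu hv).arrows = p.arrows := by
  subst hu hv; rfl

theorem length_pow {x : Q.V} (c : Path Q x x) (n : ℕ) : (c.pow n).length = n * c.length := by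
  induction n with
  | zero => simp [Path.pow, Path.length]
  | succ n ih => simp [Path.pow, ih, Nat.succ_mul, Nat.add_comm]

theorem src_eq_of_arrows_eq_cons {u v : Q.V} {p : Path Q u v} {a : Q.A} {t : List Q.A}
    (h : p.arrows = a :: t) : u = Q.src a := by
  cases p with
  | nil => simp [Path.arrows] at h
  | cons b p => simp only [Path.arrows, List.cons.injEq] at h; rw [h.1]

theorem exists_path_of_arrows_eq_cons {u v : Q.V} {p : Path Q u v} {a : Q.A}
    {t : List Q.A} (h : p.arrows = a :: t) : ∃ p' : Path Q (Q.tgt a) v, p'.arrows = t := by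
  cases p with
  | nil => simp [Path.arrows] at h
  | cons b p =>
    simp only [Path.arrows, List.cons.injEq] at h
    obtain ⟨rfl, h⟩ := h
    exact ⟨p, h⟩

theorem toSigma_injective {u v : Q.V} :
    Function.Injective (toSigma : Path Q u v → PathsSigma Q) := fun _ _ h =>
  eq_of_heq (Sigma.mk.inj_iff.mp (Sigma.mk.inj_iff.mp h).2.eq).2

theorem toSigma_eq_of_arrows_eq {u u' v v' : Q.V} {p : Path Q u v} {q : Path Q u' v'}
    (hu : u = u') (h : p.arrows = q.arrows) : p.toSigma = q.toSigma := by
  induction p generalizing u' q with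
  | nil => cases q with
    | nil => subst hu; rfl
    | cons => simp [Path.arrows] at h
  | cons a p ih => cases q with
    | nil => simp [Path.arrows] at h
    | cons b q =>
      simp only [Path.arrows, List.cons.injEq] at h
      obtain ⟨rfl, h⟩ := h
      obtain ⟨rfl, hpq⟩ := Sigma.mk.inj_iff.mp (Sigma.mk.inj_iff.mp (ih rfl h)).2.eq
      rw [eq_of_heq hpq]

theorem toSigma_eq_of_arrows_eq_of_ne_nil {u u' v v' : Q.V} {p : Path Q u v}
    {q : Path Q u' v'} (h : p.arrows = q.arrows) (hne : p.arrows ≠ []) :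
    p.toSigma = q.toSigma := by
  obtain ⟨a, t, hp⟩ := List.exists_cons_of_ne_nil hne
  exact toSigma_eq_of_arrows_eq
    ((src_eq_of_arrows_eq_cons hp).trans (src_eq_of_arrows_eq_cons (h ▸ hp)).symm) h

theorem eq_of_arrows_eq {u v : Q.V} {p q : Path Q u v} (h : p.arrows = q.arrows) : p = q :=
  toSigma_injective (toSigma_eq_of_arrows_eq rfl h)

theorem exists_eq_comp_of_arrows_eq_append {u v : Q.V} (p : Path Q u v) {l₁ l₂ : List Q.A}
    (h : p.arrows = l₁ ++ l₂) : ∃ (x : Q.V) (p₁ : Path Q u x) (p₂ : Path Q x v),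
      p = p₁.comp p₂ ∧ p₁.arrows = l₁ ∧ p₂.arrows = l₂ := by
  induction p generalizing l₁ with
  | nil =>
    obtain ⟨rfl, rfl⟩ := List.append_eq_nil_iff.mp h.symm
    exact ⟨_, .nil _, .nil _, rfl, rfl, rfl⟩
  | cons a p ih =>
    cases l₁ with
    | nil => exact ⟨_, .nil _, .cons a p, rfl, rfl, h⟩
    | cons b l₁ =>
      simp only [Path.arrows, List.cons_append, List.cons.injEq] at h
      obtain ⟨rfl, h⟩ := h
      obtain ⟨x, p₁, p₂, rfl, h₁, h₂⟩ := ih h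
      exact ⟨x, .cons a p₁, p₂, rfl, by simp [Path.arrows, h₁], h₂⟩

theorem exists_eq_comp_of_arrows_append_eq {u v w : Q.V} {p : Path Q u v} {q : Path Q u w}
    {t : List Q.A} (h : p.arrows ++ t = q.arrows) :
    ∃ r : Path Q v w, q = p.comp r ∧ r.arrows = t := by
  obtain ⟨x, p', r, rfl, hp', hr⟩ := q.exists_eq_comp_of_arrows_eq_append h.symm
  obtain ⟨rfl, hp'⟩ :=
    Sigma.mk.inj_iff.mp (Sigma.mk.inj_iff.mp (toSigma_eq_of_arrows_eq rfl hp')).2.eq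
  exact ⟨r, by rw [eq_of_heq hp'], hr⟩

theorem exists_eq_comp_of_append_arrows_eq {u v w : Q.V} {p : Path Q v w} {q : Path Q u w}
    {t : List Q.A} (h : t ++ p.arrows = q.arrows) (hne : p.arrows ≠ []) :
    ∃ r : Path Q u v, q = r.comp p ∧ r.arrows = t := by
  obtain ⟨x, r, p', rfl, hr, hp'⟩ := q.exists_eq_comp_of_arrows_eq_append h.symm
  obtain ⟨rfl, hp'⟩ := Sigma.mk.inj_iff.mp (toSigma_eq_of_arrows_eq_of_ne_nil hp' (hp' ▸ hne))
  exact ⟨r, by rw [eq_of_heq (Sigma.mk.inj_iff.mp hp'.eq).2], hr⟩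

end Path

section Algebra

variable {k : Type} [Field k]

theorem pvec_eq_of_toSigma_eq {u v u' v' : Q.V} {p : Path Q u v} {q : Path Q u' v'}
    (h : p.toSigma = q.toSigma) : pvec k p = pvec k q :=
  congrArg (Finsupp.single · 1) h

theorem lmul_pvec {u v w : Q.V} (p : Path Q u v) (q : Path Q v w) :
    lmul k p (pvec k q) = pvec k (p.comp q) := by
  unfold lmul pvec
  erw [Finsupp.sum_single_index]
  · rw [dif_pos rfl, one_smul]; rfl
  · split <;> simp

theorem rmul_pvec {u v w : Q.V} (q : Path Q u v) (p : Path Q v w) :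
    rmul k (pvec k q) p = pvec k (q.comp p) := by
  unfold rmul pvec
  erw [Finsupp.sum_single_index]
  · rw [dif_pos rfl, one_smul]; rfl
  · split <;> simp

theorem lmul_sub_smul {u v : Q.V} (p : Path Q u v) (x y : PAlg k Q) (c : k) :
    lmul k p (x - c • y) = lmul k p x - c • lmul k p y := by
  unfold lmul
  rw [Finsupp.sum_sub_index (by intros; split <;> simp [sub_smul]),
    Finsupp.sum_smul_index (by intro; split <;> simp), Finsupp.smul_sum]
  congr 1
  exact Finsupp.sum_congr fun s _ => by split <;> simp [mul_smul]

theorem rmul_sub_smul {u v : Q.V} (p : Path Q u v) (x y : PAlg k Q) (c : k) :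
    rmul k (x - c • y) p = rmul k x p - c • rmul k y p := by
  unfold rmul
  rw [Finsupp.sum_sub_index (by intros; split <;> simp [sub_smul]),
    Finsupp.sum_smul_index (by intro; split <;> simp), Finsupp.smul_sum]
  congr 1
  exact Finsupp.sum_congr fun s _ => by split <;> simp [mul_smul]

namespace AdmissibleIdeal

variable (J : AdmissibleIdeal k Q)

theorem comp_mem_of_mem_right {u v w : Q.V} (p : Path Q u v) {q : Path Q v w}
    (hq : pvec k q ∈ J.I) : pvec k (p.comp q) ∈ J.I :=
  lmul_pvec (k := k) p q ▸ J.lmul_mem p hq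

theorem comp_mem_of_mem_left {u v w : Q.V} {p : Path Q u v} (q : Path Q v w)
    (hp : pvec k p ∈ J.I) : pvec k (p.comp q) ∈ J.I :=
  rmul_pvec (k := k) p q ▸ J.rmul_mem q hp

def Congr (c : k) {u v u' v' : Q.V} (p : Path Q u v) (q : Path Q u' v') : Prop :=
  pvec k p - c • pvec k q ∈ J.I

def Follows (a b : Q.A) : Prop := ∃ h : Q.src b = Q.tgt a, pvec k (comp2 a b h) ∉ J.I

variable {J} {c d : k}

namespace Congr

variable {u v u' v' : Q.V}

theorem comp_left {p q : Path Q u v} (h : J.Congr c p q) {w : Q.V} (r : Path Q w u) :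
    J.Congr c (r.comp p) (r.comp q) := by
  have := J.lmul_mem r h
  rwa [lmul_sub_smul, lmul_pvec, lmul_pvec] at this

theorem comp_right {p q : Path Q u v} (h : J.Congr c p q) {w : Q.V} (r : Path Q v w) :
    J.Congr c (p.comp r) (q.comp r) := by
  have := J.rmul_mem r h
  rwa [rmul_sub_smul, rmul_pvec, rmul_pvec] at this

theorem symm {p : Path Q u v} {q : Path Q u' v'} (h : J.Congr c p q) (hc : c ≠ 0) :
    J.Congr c⁻¹ q p := by
  unfold Congr at h ⊢
  convert J.I.smul_mem (-c⁻¹) h using 1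
  simp only [smul_sub, smul_smul, neg_mul, inv_mul_cancel₀ hc, neg_smul, one_smul]
  abel

theorem trans {u'' v'' : Q.V} {p : Path Q u v} {q : Path Q u' v'} {r : Path Q u'' v''}
    (hpq : J.Congr c p q) (hqr : J.Congr d q r) : J.Congr (c * d) p r := by
  have := J.I.add_mem hpq (J.I.smul_mem c hqr)
  rwa [smul_sub, smul_smul, sub_add_sub_cancel] at this

theorem not_mem_right {p : Path Q u v} {q : Path Q u' v'} (h : J.Congr c p q)
    (hp : pvec k p ∉ J.I) : pvec k q ∉ J.I := fun hq =>
  hp (by simpa using J.I.add_mem h (J.I.smul_mem c hq))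

theorem mem_right {p : Path Q u v} {q : Path Q u' v'} (h : J.Congr c p q) (hc : c ≠ 0)
    (hp : pvec k p ∈ J.I) : pvec k q ∈ J.I := by
  simpa [hc] using J.I.smul_mem c⁻¹ (J.I.sub_mem hp h)

theorem pow_comp {s t : Q.V} {w : Path Q s s} {v : Path Q s t} (h : J.Congr c (w.comp v) v)
    (n : ℕ) : J.Congr (c ^ n) ((w.pow n).comp v) v := by
  induction n with
  | zero => simp [Congr, Path.pow, Path.comp]
  | succ n ih =>
    rw [pow_succ, show (w.pow (n + 1)).comp v = w.comp ((w.pow n).comp v) from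
      Path.comp_assoc _ _ _]
    exact (ih.comp_left w).trans h

end Congr

theorem mem_of_congr_cycle_comp {s t : Q.V} {w : Path Q s s} {v : Path Q s t}
    (hw : w.length ≠ 0) (hc : c ≠ 0) (h : J.Congr c (w.comp v) v) : pvec k v ∈ J.I :=
  (h.pow_comp J.bound).mem_right (pow_ne_zero _ hc) <| J.pow_le _ <| by
    rw [Path.length_comp, Path.length_pow]
    nlinarith [Nat.one_le_iff_ne_zero.mpr hw]

theorem follows_of_arrows_eq {u v : Q.V} {p : Path Q u v} {a b : Q.A} (h : p.arrows = [a, b])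
    (hp : pvec k p ∉ J.I) : J.Follows a b := by
  cases p with
  | nil => simp [Path.arrows] at h
  | cons a' p =>
    simp only [Path.arrows, List.cons.injEq] at h
    obtain ⟨rfl, h⟩ := h
    have hab := Path.src_eq_of_arrows_eq_cons h
    refine ⟨hab.symm, fun hmem => hp ?_⟩
    rwa [pvec_eq_of_toSigma_eq (Path.toSigma_eq_of_arrows_eq rfl (q := comp2 _ b hab.symm)
      (by simp [comp2, arrow, Path.arrows, h]))]

theorem isChain_follows {u v : Q.V} {p : Path Q u v} (hp : pvec k p ∉ J.I) :
    p.arrows.IsChain J.Follows := by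
  refine List.isChain_iff_forall_rel_of_append_cons_cons.2 fun a b l₁ l₂ h => ?_
  obtain ⟨_, p₁, p₂, rfl, -, h₂⟩ := p.exists_eq_comp_of_arrows_eq_append h
  obtain ⟨_, p₂, p₃, rfl, h₂, -⟩ :=
    p₂.exists_eq_comp_of_arrows_eq_append (l₁ := [a, b]) h₂
  exact follows_of_arrows_eq h₂ fun hmem =>
    hp (J.comp_mem_of_mem_right p₁ (J.comp_mem_of_mem_left p₃ hmem))

end AdmissibleIdeal

theorem SpecialBiserial.follows_rightUnique (SB : SpecialBiserial k Q) :
    Relator.RightUnique SB.Follows :=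
  fun a _ _ ⟨hb, hab⟩ ⟨hc, hac⟩ => SB.unique_succ a _ _ hb hc hab hac

theorem SpecialBiserial.follows_leftUnique (SB : SpecialBiserial k Q) :
    Relator.LeftUnique SB.Follows :=
  fun _ _ c ⟨ha, hac⟩ ⟨hb, hbc⟩ => SB.unique_pred c _ _ ha.symm hb.symm hac hbc

namespace BinRel

section Admissible

variable {J : AdmissibleIdeal k Q}

theorem congr (r : BinRel J) : J.Congr r.coef r.u r.v := r.rel_mem

def symm (r : BinRel J) : BinRel J where
  s := r.s
  t := r.t
  u := r.v
  v := r.u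
  coef := r.coef⁻¹
  coef_ne := inv_ne_zero r.coef_ne
  u_ne_v := r.u_ne_v.symm
  u_not_mem := r.v_not_mem
  v_not_mem := r.u_not_mem
  rel_mem := r.congr.symm r.coef_ne

theorem arrows_ne_nil (r : BinRel J) : r.u.arrows ≠ [] := by
  have hσ : r.v.toSigma ≠ r.u.toSigma := fun h => r.u_ne_v (Path.toSigma_injective h).symm
  have hlen : 2 ≤ r.u.length := J.le_sq _ r.rel_mem r.u.toSigma <| by
    have hu : pvec k r.u = Finsupp.single r.u.toSigma 1 := rfl
    have hv : pvec k r.v = Finsupp.single r.v.toSigma 1 := rfl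
    simp [hu, hv, Finsupp.single_eq_of_ne' hσ]
  intro h
  rw [← Path.length_arrows, h] at hlen
  simp at hlen

/-- Otherwise `v = w u` for a nontrivial cycle `w`, and `w u ≡ λ⁻¹ u` forces `u ∈ I`. -/
theorem not_isSuffix (r : BinRel J) : ¬ r.u.arrows <:+ r.v.arrows := by
  rintro ⟨t, ht⟩
  obtain ⟨w, hv, hw⟩ := Path.exists_eq_comp_of_append_arrows_eq ht r.arrows_ne_nil
  rcases eq_or_ne t [] with rfl | ht
  · exact r.u_ne_v (Path.eq_of_arrows_eq (by simpa using ht))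
  refine r.u_not_mem (AdmissibleIdeal.mem_of_congr_cycle_comp (c := r.coef⁻¹) ?_
    (inv_ne_zero r.coef_ne) (hv ▸ r.congr.symm r.coef_ne))
  rwa [← Path.length_arrows, hw, Ne, List.length_eq_zero_iff]

end Admissible

variable {SB : SpecialBiserial k Q}

/-- If `u w ∉ I` then `v w ∉ I`, so the last arrows of `u` and `v` are both followed by the
first arrow of `w`; left uniqueness then makes one of `u`, `v` a suffix of the other. -/
theorem comp_mem (r : BinRel SB.toAdmissibleIdeal) {z : Q.V} (w : Path Q r.t z)
    (hw : w.arrows ≠ []) : pvec k (r.u.comp w) ∈ SB.I := by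
  by_contra huw
  have hvw : pvec k (r.v.comp w) ∉ SB.I := (r.congr.comp_right w).not_mem_right huw
  obtain ⟨y, t, hy⟩ := List.exists_cons_of_ne_nil hw
  have last_follows : ∀ p : Path Q r.s r.t, pvec k (p.comp w) ∉ SB.I →
      ∀ x ∈ p.arrows.getLast?, SB.Follows x y := fun p hp x hx =>
    (List.isChain_append.mp (Path.arrows_comp p w ▸ AdmissibleIdeal.isChain_follows hp)).2.2
      x hx y (by simp [hy])
  have hlast : r.u.arrows.getLast? = r.v.arrows.getLast? := by
    have hv : r.v.arrows ≠ [] := r.symm.arrows_ne_nil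
    rw [List.getLast?_eq_some_getLast r.arrows_ne_nil, List.getLast?_eq_some_getLast hv]
    exact congrArg some <| SB.follows_leftUnique
      (last_follows _ huw _ (List.getLast?_eq_some_getLast _))
      (last_follows _ hvw _ (List.getLast?_eq_some_getLast _))
  rcases (AdmissibleIdeal.isChain_follows r.u_not_mem).isSuffix_or_isSuffix
    SB.follows_leftUnique (AdmissibleIdeal.isChain_follows r.v_not_mem) hlast with h | h
  exacts [r.not_isSuffix h, r.symm.not_isSuffix h]

theorem arrows_eq_of_isPrefix (r : BinRel SB.toAdmissibleIdeal) {u v : Q.V} {q : Path Q u v}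
    (hq : pvec k q ∉ SB.I) (h : r.u.arrows <+: q.arrows) : r.u.arrows = q.arrows := by
  obtain ⟨t, ht⟩ := h
  obtain ⟨a, l, hr⟩ := List.exists_cons_of_ne_nil r.arrows_ne_nil
  obtain rfl : u = r.s := (Path.src_eq_of_arrows_eq_cons (p := q) (a := a)
    (by rw [← ht, hr, List.cons_append])).trans (Path.src_eq_of_arrows_eq_cons hr).symm
  obtain ⟨w, rfl, rfl⟩ := Path.exists_eq_comp_of_arrows_append_eq ht
  rcases eq_or_ne w.arrows [] with hw | hw
  · simp [hw]
  · exact absurd (r.comp_mem w hw) hq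

theorem toSigma_eq_of_head?_eq (r r' : BinRel SB.toAdmissibleIdeal)
    (h : r.u.arrows.head? = r'.u.arrows.head?) : r.u.toSigma = r'.u.toSigma := by
  refine Path.toSigma_eq_of_arrows_eq_of_ne_nil ?_ r.arrows_ne_nil
  rcases (AdmissibleIdeal.isChain_follows r.u_not_mem).isPrefix_or_isPrefix
    SB.follows_rightUnique (AdmissibleIdeal.isChain_follows r'.u_not_mem) h with h | h
  exacts [r.arrows_eq_of_isPrefix r'.u_not_mem h, (r'.arrows_eq_of_isPrefix r.u_not_mem h).symm]

end BinRel

end Algebra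

section Components

def Linked (E : Finset Q.A) (u v : Q.V) : Prop := ∃ a ∈ E, Q.src a = u ∧ Q.tgt a = v

def numComponentsOf (E : Finset Q.A) : ℕ := Nat.card (Quot (Linked E))

theorem numComponentsOf_univ : numComponentsOf (Finset.univ : Finset Q.A) = numComponents Q := by
  have : Linked (Finset.univ : Finset Q.A) = fun u v => ∃ a, Q.src a = u ∧ Q.tgt a = v := by
    funext u v; simp [Linked]
  rw [numComponentsOf, this, numComponents]

theorem mk_eq_mk_of_arrows_subset {E : Finset Q.A} {u v : Q.V} (p : Path Q u v)
    (h : ∀ a ∈ p.arrows, a ∈ E) : Quot.mk (Linked E) u = Quot.mk (Linked E) v := by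
  induction p with
  | nil => rfl
  | cons a p ih =>
    simp only [Path.arrows, List.mem_cons, forall_eq_or_imp] at h
    exact (Quot.sound ⟨a, h.1, rfl, rfl⟩).trans (ih h.2)

theorem numComponentsOf_erase_le {E : Finset Q.A} {e : Q.A}
    (he : Quot.mk (Linked (E.erase e)) (Q.src e) = Quot.mk _ (Q.tgt e)) :
    numComponentsOf (E.erase e) ≤ numComponentsOf E := by
  refine Nat.card_quot_le_of_forall_mk_eq fun u v ⟨a, ha, hu, hv⟩ => ?_
  subst hu hv
  by_cases hae : a = e
  · exact hae ▸ he
  · exact Quot.sound ⟨a, Finset.mem_erase.mpr ⟨hae, ha⟩, rfl, rfl⟩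

theorem card_add_numComponentsOf_erase_le (E : Finset Q.A) (e : Q.A) :
    (E.erase e).card + numComponentsOf (E.erase e) ≤ E.card + numComponentsOf E := by
  by_cases he : e ∈ E
  · have : numComponentsOf (E.erase e) ≤ numComponentsOf E + 1 :=
      Nat.card_quot_le_add_one_of_forall_or (x := Q.src e) (y := Q.tgt e)
        fun u v ⟨a, ha, hu, hv⟩ => by
          by_cases hae : a = e
          · subst hae; exact .inr ⟨hu.symm, hv.symm⟩
          · exact .inl ⟨a, Finset.mem_erase.mpr ⟨hae, ha⟩, hu, hv⟩
    have := Finset.card_erase_add_one he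
    omega
  · rw [Finset.erase_eq_of_notMem he]

theorem card_add_numComponentsOf_le_of_subset {E E' : Finset Q.A} (h : E' ⊆ E) :
    E'.card + numComponentsOf E' ≤ E.card + numComponentsOf E := by
  induction E using Finset.strongInduction generalizing E' with
  | H E ih =>
    obtain rfl | ⟨e, he, he'⟩ := eq_or_ne E' E |>.imp id fun hne =>
      Finset.exists_of_ssubset (h.ssubset_of_ne hne)
    · exact le_rfl
    · exact (ih _ (Finset.erase_ssubset he) (Finset.subset_erase.mpr ⟨h, he'⟩)).trans
        (card_add_numComponentsOf_erase_le E e)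

theorem card_le_numComponentsOf_of_forall_notMem {E : Finset Q.A} {T : Finset Q.V}
    (hT : ∀ a ∈ E, Q.src a ∉ T ∧ Q.tgt a ∉ T) : T.card ≤ numComponentsOf E := by
  let f : Quot (Linked E) → Option Q.V :=
    Quot.lift (fun v => if v ∈ T then some v else none) fun u v ⟨a, ha, hu, hv⟩ => by
      simp [← hu, ← hv, (hT a ha).1, (hT a ha).2]
  have hinj : Function.Injective fun v : T => Quot.mk (Linked E) v.1 := fun u v huv => by
    have := congrArg f huv
    simp only [f, if_pos u.2, if_pos v.2] at this
    exact Subtype.ext (Option.some_injective _ this)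
  unfold numComponentsOf
  simpa using Nat.card_le_card_of_injective _ hinj

end Components

structure ParallelPairs (Q : FQuiver) (F : Q.A → Q.A → Prop) (ι : Type*) where
  src : ι → Q.V
  tgt : ι → Q.V
  path : ∀ i, Bool → Path Q (src i) (tgt i)
  head : ι → Bool → Q.A
  head?_arrows : ∀ i s, (path i s).arrows.head? = some (head i s)
  head_injective : Function.Injective (Function.uncurry head)
  isChain : ∀ i s, (path i s).arrows.IsChain F

namespace ParallelPairs

variable {F : Q.A → Q.A → Prop} {ι : Type*}

def arrowsOf (P : ParallelPairs Q F ι) (S : Finset ι) : Finset Q.A :=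
  S.biUnion fun i => Finset.univ.biUnion fun s => (P.path i s).arrows.toFinset

variable {P : ParallelPairs Q F ι}

theorem mem_arrowsOf {S : Finset ι} {a : Q.A} :
    a ∈ P.arrowsOf S ↔ ∃ i ∈ S, ∃ s, a ∈ (P.path i s).arrows := by
  simp only [arrowsOf, Finset.mem_biUnion, Finset.mem_univ, true_and, List.mem_toFinset]

theorem arrows_eq_cons (i : ι) (s : Bool) :
    (P.path i s).arrows = P.head i s :: (P.path i s).arrows.tail :=
  List.eq_cons_of_mem_head? (P.head?_arrows i s)

theorem src_head (i : ι) (s : Bool) : Q.src (P.head i s) = P.src i :=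
  (Path.src_eq_of_arrows_eq_cons (P.arrows_eq_cons i s)).symm

theorem head_mem_arrowsOf {S : Finset ι} {i : ι} (hi : i ∈ S) (s : Bool) :
    P.head i s ∈ P.arrowsOf S :=
  mem_arrowsOf.2 ⟨i, hi, s, P.arrows_eq_cons i s ▸ List.mem_cons_self⟩

theorem arrowsOf_mono {S S' : Finset ι} (h : S' ⊆ S) : P.arrowsOf S' ⊆ P.arrowsOf S :=
  Finset.biUnion_subset_biUnion_of_subset_left _ h

theorem eq_head_of_forall_not_rel {S : Finset ι} {e : Q.A}
    (hpred : ∀ a ∈ P.arrowsOf S, ¬ F a e) {i : ι} (hi : i ∈ S) {s : Bool}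
    (he : e ∈ (P.path i s).arrows) : e = P.head i s ∧ e ∉ (P.path i s).arrows.tail := by
  have hchain := P.arrows_eq_cons i s ▸ P.isChain i s
  have htail : e ∉ (P.path i s).arrows.tail := fun he' =>
    let ⟨a, ha, hae⟩ := hchain.exists_rel_of_mem_tail he'
    hpred a (mem_arrowsOf.2 ⟨i, hi, s, P.arrows_eq_cons i s ▸ ha⟩) hae
  rw [P.arrows_eq_cons i s, List.mem_cons] at he
  exact ⟨he.resolve_right htail, htail⟩

/-- An arrow without `F`-predecessor is the first arrow of exactly one path `path i s`; the
partner `path i !s` keeps its ends connected, so it can be deleted together with `i`. -/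
theorem card_add_card_le_of_forall_not_rel {S : Finset ι}
    (ih : ∀ S' ⊂ S,
      S'.card + Fintype.card Q.V ≤ (P.arrowsOf S').card + numComponentsOf (P.arrowsOf S'))
    {e : Q.A} (he : e ∈ P.arrowsOf S) (hpred : ∀ a ∈ P.arrowsOf S, ¬ F a e) :
    S.card + Fintype.card Q.V ≤ (P.arrowsOf S).card + numComponentsOf (P.arrowsOf S) := by
  obtain ⟨i, hi, s, hes⟩ := mem_arrowsOf.1 he
  have honly : ∀ j ∈ S, ∀ t, e ∈ (P.path j t).arrows → j = i ∧ t = s := by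
    intro j hj t het
    exact Prod.ext_iff.mp <| P.head_injective (a₁ := (j, t)) (a₂ := (i, s)) <|
      (P.eq_head_of_forall_not_rel hpred hj het).1.symm.trans
        (P.eq_head_of_forall_not_rel hpred hi hes).1
  obtain ⟨rfl, htail⟩ := P.eq_head_of_forall_not_rel hpred hi hes
  have hsub : P.arrowsOf (S.erase i) ⊆ (P.arrowsOf S).erase (P.head i s) := fun a ha => by
    obtain ⟨j, hj, t, hat⟩ := mem_arrowsOf.1 ha
    refine Finset.mem_erase.2 ⟨fun hae => ?_, P.arrowsOf_mono (S.erase_subset i) ha⟩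
    exact Finset.ne_of_mem_erase hj (honly j (Finset.mem_of_mem_erase hj) t (hae ▸ hat)).1
  have hlinked : Quot.mk (Linked ((P.arrowsOf S).erase (P.head i s))) (Q.src (P.head i s)) =
      Quot.mk _ (Q.tgt (P.head i s)) := by
    obtain ⟨p, hp⟩ := Path.exists_path_of_arrows_eq_cons (P.arrows_eq_cons i s)
    rw [P.src_head, mk_eq_mk_of_arrows_subset (P.path i !s) fun a ha =>
      Finset.mem_erase.2 ⟨fun hae => Bool.not_ne_self s (honly i hi _ (by rwa [← hae])).2,
        mem_arrowsOf.2 ⟨i, hi, _, ha⟩⟩]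
    exact (mk_eq_mk_of_arrows_subset p fun a ha => Finset.mem_erase.2
      ⟨fun hae => htail (by rw [← hae, ← hp]; exact ha), mem_arrowsOf.2 ⟨i, hi, s, by
        rw [P.arrows_eq_cons i s]; exact List.mem_cons_of_mem _ (hp ▸ ha)⟩⟩).symm
  have h₁ := ih _ (Finset.erase_ssubset hi)
  have h₂ := card_add_numComponentsOf_le_of_subset hsub
  have h₃ := numComponentsOf_erase_le hlinked
  have h₄ := Finset.card_erase_add_one hi
  have h₅ := Finset.card_erase_add_one (P.head_mem_arrowsOf hi s)
  omega

/-- Every arrow then also has an `F`-successor, so every vertex met by the paths is the source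
of one of their arrows, and the common source of each pair is the source of two. -/
theorem card_add_card_le_of_forall_exists_rel (hF : Relator.RightUnique F)
    (hFc : ∀ a b, F a b → Q.src b = Q.tgt a) {S : Finset ι}
    (hpred : ∀ e ∈ P.arrowsOf S, ∃ a ∈ P.arrowsOf S, F a e) :
    S.card + Fintype.card Q.V ≤ (P.arrowsOf S).card + numComponentsOf (P.arrowsOf S) := by
  set E := P.arrowsOf S
  set T := E.image Q.src
  have htgt : ∀ b ∈ E, Q.tgt b ∈ T := fun b hb =>
    let ⟨e, he, hbe⟩ := hF.exists_rel_of_forall_exists_rel hpred b hb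
    Finset.mem_image.2 ⟨e, he, hFc _ _ hbe⟩
  have hsrc : ∀ i ∈ S, P.src i ∈ T := fun i hi =>
    Finset.mem_image.2 ⟨_, P.head_mem_arrowsOf hi true, P.src_head i true⟩
  have hfiber :
      ∀ v ∈ T, (S.filter (P.src · = v)).card + 1 ≤ (E.filter (Q.src · = v)).card := by
    intro v hv
    obtain ⟨a, ha, rfl⟩ := Finset.mem_image.1 hv
    have h₁ : 0 < (E.filter (Q.src · = Q.src a)).card := Finset.card_pos.2 ⟨a, by simp [ha]⟩
    have h₂ := Finset.card_le_card_of_injOn (Function.uncurry P.head)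
      (s := S.filter (P.src · = Q.src a) ×ˢ Finset.univ) (t := E.filter (Q.src · = Q.src a))
      (fun ⟨j, t⟩ hx => by
        simp only [Finset.coe_product, Set.mem_prod, Finset.mem_coe, Finset.mem_filter] at hx
        exact Finset.mem_filter.2 ⟨P.head_mem_arrowsOf hx.1.1 t, (P.src_head j t).trans hx.1.2⟩)
      P.head_injective.injOn
    rw [Finset.card_product, Finset.card_univ, Fintype.card_bool] at h₂
    omega
  have hcount : S.card + T.card ≤ E.card := calc
    S.card + T.card = ∑ v ∈ T, ((S.filter (P.src · = v)).card + 1) := by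
      rw [Finset.sum_add_distrib, ← Finset.card_eq_sum_card_fiberwise hsrc]; simp
    _ ≤ ∑ v ∈ T, (E.filter (Q.src · = v)).card := Finset.sum_le_sum hfiber
    _ = E.card := (Finset.card_eq_sum_card_image _ _).symm
  have huntouched : Tᶜ.card ≤ numComponentsOf E :=
    card_le_numComponentsOf_of_forall_notMem fun a ha =>
      ⟨fun h => Finset.mem_compl.1 h (Finset.mem_image_of_mem _ ha),
        fun h => Finset.mem_compl.1 h (htgt a ha)⟩
  have := Finset.card_add_card_compl T
  omega

theorem card_add_card_le (hF : Relator.RightUnique F) (hFc : ∀ a b, F a b → Q.src b = Q.tgt a)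
    (S : Finset ι) :
    S.card + Fintype.card Q.V ≤ (P.arrowsOf S).card + numComponentsOf (P.arrowsOf S) := by
  induction S using Finset.strongInduction with
  | H S ih =>
    by_cases h : ∃ e ∈ P.arrowsOf S, ∀ a ∈ P.arrowsOf S, ¬ F a e
    · obtain ⟨e, he, hpred⟩ := h
      exact card_add_card_le_of_forall_not_rel ih he hpred
    · push Not at h
      exact card_add_card_le_of_forall_exists_rel hF hFc h

theorem finite (P : ParallelPairs Q F ι) : Finite ι :=
  Finite.of_injective (fun i => P.head i true) fun i j h =>
    congrArg Prod.fst (P.head_injective (a₁ := (i, true)) (a₂ := (j, true)) h)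

theorem card_add_card_le_card_add_numComponents [Fintype ι] (P : ParallelPairs Q F ι)
    (hF : Relator.RightUnique F) (hFc : ∀ a b, F a b → Q.src b = Q.tgt a) :
    Fintype.card ι + Fintype.card Q.V ≤ Fintype.card Q.A + numComponents Q := by
  simpa [← numComponentsOf_univ] using (P.card_add_card_le hF hFc Finset.univ).trans
    (card_add_numComponentsOf_le_of_subset (Finset.subset_univ _))

end ParallelPairs

variable {k : Type} [Field k]

namespace BinRel

variable {J : AdmissibleIdeal k Q}

def side (r : BinRel J) : Bool → Path Q r.s r.t
  | true => r.u
  | false => r.v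

theorem side_not_mem (r : BinRel J) (s : Bool) : pvec k (r.side s) ∉ J.I := by
  cases s
  exacts [r.v_not_mem, r.u_not_mem]

theorem side_arrows_ne_nil (r : BinRel J) (s : Bool) : (r.side s).arrows ≠ [] := by
  cases s
  exacts [r.symm.arrows_ne_nil, r.arrows_ne_nil]

theorem mk_pvec_side (r : BinRel J) (s : Bool) :
    (Submodule.Quotient.mk (pvec k (r.side s)) : PAlg k Q ⧸ J.I) =
      (bif s then 1 else r.coef⁻¹) • Submodule.Quotient.mk (pvec k r.u) := by
  cases s
  · rw [← Submodule.Quotient.mk_smul, Submodule.Quotient.eq]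
    exact r.symm.congr
  · exact (one_smul _ _).symm

theorem toSigma_side_eq_of_head?_eq {SB : SpecialBiserial k Q}
    (r r' : BinRel SB.toAdmissibleIdeal) (s s' : Bool)
    (h : (r.side s).arrows.head? = (r'.side s').arrows.head?) :
    (r.side s).toSigma = (r'.side s').toSigma := by
  cases s <;> cases s'
  exacts [toSigma_eq_of_head?_eq r.symm r'.symm h, toSigma_eq_of_head?_eq r.symm r' h,
    toSigma_eq_of_head?_eq r r'.symm h, toSigma_eq_of_head?_eq r r' h]

end BinRel

/-- Two of these paths with a common first arrow coincide, so their classes are proportional and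
linear independence identifies them. -/
def parallelPairsOfLinearIndependent {SB : SpecialBiserial k Q} {ι : Type*}
    (r : ι → BinRel SB.toAdmissibleIdeal)
    (hr : LinearIndependent k
      fun i => (Submodule.Quotient.mk (pvec k (r i).u) : PAlg k Q ⧸ SB.I)) :
    ParallelPairs Q SB.Follows ι where
  src i := (r i).s
  tgt i := (r i).t
  path i := (r i).side
  head i s := ((r i).side s).arrows.head ((r i).side_arrows_ne_nil s)
  head?_arrows i s := List.head?_eq_some_head _
  head_injective := by
    rintro ⟨i, s⟩ ⟨j, t⟩ h
    have hσ := BinRel.toSigma_side_eq_of_head?_eq (r i) (r j) s t <| by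
      rw [List.head?_eq_some_head ((r i).side_arrows_ne_nil s),
        List.head?_eq_some_head ((r j).side_arrows_ne_nil t)]
      exact congrArg some h
    obtain rfl : i = j := hr.eq_of_smul_apply_eq_smul_apply (bif s then 1 else (r i).coef⁻¹)
      (bif t then 1 else (r j).coef⁻¹) i j (by cases s <;> simp [(r i).coef_ne])
      (by rw [← BinRel.mk_pvec_side, ← BinRel.mk_pvec_side, pvec_eq_of_toSigma_eq hσ])
    cases s <;> cases t
    · rfl
    · exact absurd (Path.toSigma_injective hσ).symm (r i).u_ne_v
    · exact absurd (Path.toSigma_injective hσ) (r i).u_ne_v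
    · rfl
  isChain i s := AdmissibleIdeal.isChain_follows ((r i).side_not_mem s)

end

theorem stmt7_general {k : Type} [Field k] {Q : FQuiver} (SB : SpecialBiserial k Q)
    (R : Set (BinRel SB.toAdmissibleIdeal)) :
    Module.finrank k ↥(Smod SB.toAdmissibleIdeal R) + Fintype.card Q.V ≤
      Fintype.card Q.A + numComponents Q := by
  obtain ⟨κ, a, -, hspan, hli⟩ := exists_linearIndependent' k
    fun r : R => (Submodule.Quotient.mk (pvec k r.1.u) : PAlg k Q ⧸ SB.I)
  let P := parallelPairsOfLinearIndependent (fun j => (a j).1) hli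
  have := P.finite
  have := Fintype.ofFinite κ
  have hdim : Module.finrank k ↥(Smod SB.toAdmissibleIdeal R) = Fintype.card κ := by
    rw [Smod, Set.image_eq_range, ← hspan]
    exact finrank_span_eq_card hli
  rw [hdim]
  exact P.card_add_card_le_card_add_numComponents SB.follows_rightUnique fun _ _ h => h.1

/-- for a special biserial bound quiver, `dim_k S ≤ χ(Q)`, i.e.
`dim_k S + |Q₀| ≤ |Q₁| + N`. -/
theorem stmt7 {k : Type} [Field k] {Q : FQuiver} (SB : SpecialBiserial k Q)
    (R : Set (BinRel SB.toAdmissibleIdeal))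
    (hgen : Generates SB.toAdmissibleIdeal R) :
    Module.finrank k ↥(Smod SB.toAdmissibleIdeal R) + Fintype.card Q.V ≤
      Fintype.card Q.A + numComponents Q :=
  stmt7_general SB R

end FQuiver
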